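/- arXiv:2505.02544 — 2 statements merged into one kernel-verified Lean document; each statement's English description precedes it below -/
import Mathlib

section
/- Assume a nested system of fundamental sequences on Γ. If β ≤ α ≤ Γ, there exists a natural number n > 1 such that α ⇒_n β, meaning β is obtained from α by finitely many (possibly zero) applications of the map δ ↦ δ[n]. -/
open Ordinal

/-- A system of fundamental sequences on `Γ`: to each ordinal `α ≤ Γ` we associate a
non-decreasing sequence `fs α n` with `sup {fs α n + 1 : n} = α` for `α ≠ 0`, and `fs 0 n = 0`. -/
structure FSSystem (Γ : Ordinal) where
  fs : Ordinal → ℕ → Ordinal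
  fs_zero : ∀ n, fs 0 n = 0
  mono : ∀ α, α ≤ Γ → Monotone (fs α)
  sup_eq : ∀ α, α ≤ Γ → α ≠ 0 → (⨆ n : ℕ, fs α n + 1) = α

/-- The system is nested: it is never the case, for `γ < β ≤ Γ` and `n > 1`,
that `γ > β[n] > γ[n]`. -/
def FSSystem.Nested {Γ : Ordinal} (S : FSSystem Γ) : Prop :=
  ∀ γ β (n : ℕ), γ < β → β ≤ Γ → 1 < n → ¬ (S.fs γ n < S.fs β n ∧ S.fs β n < γ)

/-- Iterated evaluation `α[s_0][s_1]…[s_{m-1}]` along a list. -/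
def FSSystem.evalL {Γ : Ordinal} (S : FSSystem Γ) (α : Ordinal) (s : List ℕ) : Ordinal :=
  s.foldl S.fs α

/-- `α ⇒_n β`: `β` is obtained from `α` by finitely many applications of `δ ↦ δ[n]`. -/
def FSSystem.Reaches {Γ : Ordinal} (S : FSSystem Γ) (n : ℕ) (α β : Ordinal) : Prop :=
  ∃ k : ℕ, (fun δ => S.fs δ n)^[k] α = β

/-!
Induct on `α`. For `β < α`, pick `n > 1` with `β ≤ α[n]`; by induction `α[n] ⇒_m β` for some
`m > 1`, so it suffices to make a single index work for both steps. The nesting condition gives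
this: for `1 < n ≤ m` the `m`-orbit of `α` can never jump over `α[n]` (a jump from `δ` to
`δ[m] < α[n] < δ` would give `δ[n] < α[n] < δ`), hence it lands on `α[n]`. So `α ⇒_n γ` implies
`α ⇒_m γ`, and `max n m` works.
-/

namespace FSSystem

variable {Γ : Ordinal} {S : FSSystem Γ}

theorem fs_lt {α : Ordinal} (hα : α ≤ Γ) (h0 : α ≠ 0) (n : ℕ) : S.fs α n < α := by
  have h : S.fs α n + 1 ≤ ⨆ m : ℕ, S.fs α m + 1 := le_ciSup bddAbove_of_small n
  rw [S.sup_eq α hα h0] at h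
  exact Order.add_one_le_iff.mp h

theorem fs_le {α : Ordinal} (hα : α ≤ Γ) (n : ℕ) : S.fs α n ≤ α := by
  rcases eq_or_ne α 0 with rfl | h0
  · exact (S.fs_zero n).le
  · exact (fs_lt hα h0 n).le

theorem fs_le_of_le {α : Ordinal} (hα : α ≤ Γ) (n : ℕ) : S.fs α n ≤ Γ :=
  (fs_le hα n).trans hα

theorem exists_le_fs {α β : Ordinal} (hα : α ≤ Γ) (hβα : β < α) (N : ℕ) :
    ∃ n, N ≤ n ∧ β ≤ S.fs α n := by
  have hβ : β < ⨆ m : ℕ, S.fs α m + 1 := by rwa [S.sup_eq α hα hβα.ne_bot]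
  obtain ⟨n₀, hn₀⟩ := (lt_ciSup_iff bddAbove_of_small).mp hβ
  exact ⟨max n₀ N, le_max_right _ _,
    (Order.lt_add_one_iff.mp hn₀).trans (S.mono α hα (le_max_left _ _))⟩

namespace Reaches

theorem refl (n : ℕ) (α : Ordinal) : S.Reaches n α α := ⟨0, rfl⟩

theorem trans {n : ℕ} {α β γ : Ordinal} (h₁ : S.Reaches n α β) (h₂ : S.Reaches n β γ) :
    S.Reaches n α γ := by
  obtain ⟨k₁, rfl⟩ := h₁
  obtain ⟨k₂, rfl⟩ := h₂
  exact ⟨k₂ + k₁, Function.iterate_add_apply _ _ _ _⟩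

theorem of_fs {n : ℕ} {α β : Ordinal} (h : S.Reaches n (S.fs α n) β) : S.Reaches n α β := by
  obtain ⟨k, rfl⟩ := h
  exact ⟨k + 1, Function.iterate_succ_apply _ _ _⟩

theorem fs_self (n : ℕ) (α : Ordinal) : S.Reaches n α (S.fs α n) :=
  of_fs (refl n _)

end Reaches

theorem reaches_of_le_fs {m : ℕ} {α c : Ordinal} (hα : α ≤ Γ) (hcα : c ≤ α)
    (hstep : ∀ δ ∈ Set.Ioc c α, c ≤ S.fs δ m) : S.Reaches m α c := by
  induction α using WellFoundedLT.induction with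
  | _ α IH =>
    rcases hcα.eq_or_lt with rfl | hlt
    · exact Reaches.refl m c
    · have hfs : S.fs α m < α := fs_lt hα hlt.ne_bot m
      exact Reaches.of_fs <| IH _ hfs (fs_le_of_le hα m) (hstep α ⟨hlt, le_rfl⟩)
        fun δ hδ => hstep δ ⟨hδ.1, hδ.2.trans hfs.le⟩

theorem reaches_fs_of_le (hN : S.Nested) {n m : ℕ} (hn : 1 < n) (hnm : n ≤ m)
    {α : Ordinal} (hα : α ≤ Γ) : S.Reaches m α (S.fs α n) := by
  refine reaches_of_le_fs hα (fs_le hα n) fun δ ⟨hαδ, hδα⟩ => ?_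
  rcases hδα.eq_or_lt with rfl | hδα
  · exact S.mono δ hα hnm
  · have hαn : S.fs α n ≤ S.fs δ n :=
      le_of_not_gt fun h => hN δ α n hδα hα hn ⟨h, hαδ⟩
    exact hαn.trans (S.mono δ (hδα.le.trans hα) hnm)

theorem Reaches.mono_index (hN : S.Nested) {n m : ℕ} (hn : 1 < n) (hnm : n ≤ m)
    {α β : Ordinal} (hα : α ≤ Γ) (h : S.Reaches n α β) : S.Reaches m α β := by
  obtain ⟨k, rfl⟩ := h
  induction k generalizing α with
  | zero => exact Reaches.refl m α
  | succ k IH =>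
    rw [Function.iterate_succ_apply]
    exact (reaches_fs_of_le hN hn hnm hα).trans (IH (fs_le_of_le hα n))

end FSSystem

/-- In a nested system, if `β ≤ α ≤ Γ` then there exists `n > 1` with `α ⇒_n β`. -/
theorem nested_canonical_norm {Γ : Ordinal} (S : FSSystem Γ) (hN : S.Nested)
    (α β : Ordinal) (hβα : β ≤ α) (hα : α ≤ Γ) :
    ∃ n : ℕ, 1 < n ∧ S.Reaches n α β := by
  induction α using WellFoundedLT.induction generalizing β with
  | _ α IH =>
    rcases hβα.eq_or_lt with rfl | hβα
    · exact ⟨2, one_lt_two, FSSystem.Reaches.refl 2 β⟩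
    obtain ⟨n, hn, hβ⟩ := FSSystem.exists_le_fs hα hβα 2
    have hαn : S.fs α n < α := FSSystem.fs_lt hα hβα.ne_bot n
    obtain ⟨m, hm, hreach⟩ := IH _ hαn β hβ (FSSystem.fs_le_of_le hα n)
    refine ⟨max n m, hm.trans_le (le_max_right _ _), ?_⟩
    exact ((FSSystem.Reaches.fs_self n α).mono_index hN hn (le_max_left _ _) hα).trans
      (hreach.mono_index hN hm (le_max_right _ _) (FSSystem.fs_le_of_le hα n))
end

section
/- Given a nested system of fundamental sequences on Γ, an infinite set M with min M > 1, and α ≤ Γ, let B^α be the barrier of α-size subsets of M. Then for each t ∈ T(B^α), the height of t in the tree T(B^α) equals α[t]. In particular ht(B^α) = α. -/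
open Ordinal

/-- The base of a family of finite increasing sequences: all naturals occurring in it. -/
def sbase (B : Set (List ℕ)) : Set ℕ := {n | ∃ s ∈ B, n ∈ s}

/-- A block: a non-degenerate front. Finite subsets of `ℕ` are identified with their increasing
enumerations. Every infinite subset of the base (given by its increasing enumeration `f`) has an
initial segment in `B`, and `B` is prefix-free. -/
structure IsBlock (B : Set (List ℕ)) : Prop where
  sorted : ∀ s ∈ B, s.Pairwise (· < ·)
  base_infinite : (sbase B).Infinite
  prefix_exists : ∀ f : ℕ → ℕ, StrictMono f → (∀ i, f i ∈ sbase B) →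
    ∃ k, (List.range k).map f ∈ B
  prefix_free : ∀ s ∈ B, ∀ t ∈ B, s <+: t → s = t

/-- Smoothness: for `s, t ∈ B` with `|s| < |t|` there is `i < |s|` with `s(i) < t(i)`. -/
def IsSmooth (B : Set (List ℕ)) : Prop :=
  ∀ s ∈ B, ∀ t ∈ B, s.length < t.length →
    ∃ i, ∃ (hi : i < s.length) (hi' : i < t.length), s.get ⟨i, hi⟩ < t.get ⟨i, hi'⟩

/-- The tree `T(B)`: the closure of `B` under initial segments. -/
def TreeOf (B : Set (List ℕ)) : Set (List ℕ) := {s | ∃ t ∈ B, s <+: t}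

/-- The child relation on the tree `T(B)`: `t` is a one-point extension of `s` lying in `T(B)`. -/
def childRel (B : Set (List ℕ)) (t s : List ℕ) : Prop :=
  t ∈ TreeOf B ∧ ∃ n, t = s ++ [n]

/-- The height of the node `s` in the well-founded tree `T(B)`. -/
noncomputable def nodeHt (B : Set (List ℕ)) (h : WellFounded (childRel B)) (s : List ℕ) :
    Ordinal :=
  (h.apply s).rank

/-- The height `ht(B)` of the front `B`: the height of the tree `T(B)`. -/
noncomputable def htB (B : Set (List ℕ)) (h : WellFounded (childRel B)) : Ordinal :=
  nodeHt B h []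

/-- The family `B^α` of `α`-size subsets of `M`: the minimal `α`-large increasing sequences
from `M`. -/
def sizeFam {Γ : Ordinal} (S : FSSystem Γ) (α : Ordinal) (M : Set ℕ) : Set (List ℕ) :=
  {s | s.Pairwise (· < ·) ∧ (∀ x ∈ s, x ∈ M) ∧
    S.evalL α s = 0 ∧ (s = [] ∨ S.evalL α s.dropLast ≠ 0)}

/-!
The height of a node `t` of `T(B^α)` is computed by well-founded induction on the tree.
The nodes of `T(B^α)` are exactly the increasing sequences from `M` all of whose proper initial
segments `s` have `α[s] ≠ 0`, so the children of a node `t` with `α[t] ≠ 0` are the extensions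
`t ++ [m]` with `m ∈ M` above `t`. Their heights are `α[t][m]` by induction, and since `M` is
infinite, these are cofinal in the fundamental sequence of `α[t]`, whose supremum is `α[t]`.
-/

theorem List.IsPrefix.dropLast {α : Type*} {l l' : List α} (h : l <+: l') :
    l.dropLast <+: l'.dropLast := by
  obtain ⟨r, rfl⟩ := h
  rcases eq_or_ne r [] with rfl | hr
  · simp
  · rw [List.dropLast_append_of_ne_nil hr]
    exact l.dropLast_prefix.trans (List.prefix_append _ _)

theorem Set.Infinite.exists_mem_ge_forall_lt {M : Set ℕ} (hM : M.Infinite) (t : List ℕ)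
    (n : ℕ) : ∃ m ∈ M, n ≤ m ∧ ∀ x ∈ t, x < m := by
  obtain ⟨m, hmM, hm⟩ := hM.exists_gt (n + t.sum)
  exact ⟨m, hmM, by omega, fun x hx => (List.le_sum_of_mem hx).trans_lt (by omega)⟩

namespace FSSystem

variable {Γ : Ordinal} (S : FSSystem Γ)

theorem fs_lt_self {β : Ordinal} (hβ : β ≤ Γ) (h0 : β ≠ 0) (n : ℕ) : S.fs β n < β :=
  (Order.lt_add_one_iff.2 le_rfl).trans_le
    ((Ordinal.le_iSup (fun m => S.fs β m + 1) n).trans_eq (S.sup_eq β hβ h0))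

theorem fs_le_self {β : Ordinal} (hβ : β ≤ Γ) (n : ℕ) : S.fs β n ≤ β := by
  rcases eq_or_ne β 0 with rfl | h0
  · rw [S.fs_zero]
  · exact (S.fs_lt_self hβ h0 n).le

theorem evalL_le (s : List ℕ) {β : Ordinal} (hβ : β ≤ Γ) : S.evalL β s ≤ Γ := by
  induction s generalizing β with
  | nil => exact hβ
  | cons n s ih => exact ih ((S.fs_le_self hβ n).trans hβ)

theorem evalL_append (β : Ordinal) (s u : List ℕ) :
    S.evalL β (s ++ u) = S.evalL (S.evalL β s) u :=
  List.foldl_append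

theorem evalL_concat (β : Ordinal) (s : List ℕ) (n : ℕ) :
    S.evalL β (s ++ [n]) = S.fs (S.evalL β s) n :=
  S.evalL_append β s [n]

theorem evalL_eq_zero_of_prefix {β : Ordinal} {s u : List ℕ} (h0 : S.evalL β s = 0)
    (hsu : s <+: u) : S.evalL β u = 0 := by
  obtain ⟨r, rfl⟩ := hsu
  rw [evalL_append, h0]
  induction r with
  | nil => rfl
  | cons n r ih => rwa [evalL, List.foldl_cons, S.fs_zero]

end FSSystem

theorem mem_treeOf_of_prefix {B : Set (List ℕ)} {s t : List ℕ} (hst : s <+: t)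
    (ht : t ∈ TreeOf B) : s ∈ TreeOf B :=
  let ⟨u, hu, htu⟩ := ht
  ⟨u, hu, hst.trans htu⟩

section Height

variable {B : Set (List ℕ)} (hwf : WellFounded (childRel B))

theorem nodeHt_lt_of_childRel {c t : List ℕ} (hc : childRel B c t) :
    nodeHt B hwf c < nodeHt B hwf t :=
  Acc.rank_lt_of_rel _ hc

theorem nodeHt_le_of_forall_childRel {t : List ℕ} {o : Ordinal}
    (h : ∀ c, childRel B c t → nodeHt B hwf c < o) : nodeHt B hwf t ≤ o := by
  rw [nodeHt, Acc.rank_eq]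
  exact Ordinal.iSup_le fun c => Order.succ_le_of_lt (h c.1 c.2)

end Height

section SizeFam

variable {Γ : Ordinal} (S : FSSystem Γ) {M : Set ℕ} {α : Ordinal}

def IsSizeFamNode (S : FSSystem Γ) (α : Ordinal) (M : Set ℕ) (t : List ℕ) : Prop :=
  t.Pairwise (· < ·) ∧ (∀ x ∈ t, x ∈ M) ∧ (t = [] ∨ S.evalL α t.dropLast ≠ 0)

variable {S}

theorem IsSizeFamNode.concat {t : List ℕ} {m : ℕ} (ht : IsSizeFamNode S α M t)
    (h0 : S.evalL α t ≠ 0) (hm : m ∈ M) (hlt : ∀ x ∈ t, x < m) :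
    IsSizeFamNode S α M (t ++ [m]) := by
  refine ⟨List.pairwise_append.2 ⟨ht.1, List.pairwise_singleton _ _, by simpa using hlt⟩,
    by simpa [or_imp, forall_and] using ⟨ht.2.1, hm⟩, ?_⟩
  rw [List.dropLast_concat]
  exact Or.inr h0

theorem IsSizeFamNode.mem_treeOf (hM : M.Infinite) (hα : α ≤ Γ) {t : List ℕ}
    (ht : IsSizeFamNode S α M t) : t ∈ TreeOf (sizeFam S α M) := by
  induction hβ : S.evalL α t using WellFoundedLT.induction generalizing t with
  | _ β IH =>
    subst hβ
    rcases eq_or_ne (S.evalL α t) 0 with h0 | h0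
    · exact ⟨t, ⟨ht.1, ht.2.1, h0, ht.2.2⟩, List.prefix_refl t⟩
    obtain ⟨m, hm, -, hlt⟩ := hM.exists_mem_ge_forall_lt t 0
    have hdesc : S.evalL α (t ++ [m]) < S.evalL α t := by
      rw [S.evalL_concat]
      exact S.fs_lt_self (S.evalL_le t hα) h0 m
    exact mem_treeOf_of_prefix (List.prefix_append t [m])
      (IH _ hdesc (ht.concat h0 hm hlt) rfl)

theorem mem_treeOf_sizeFam_iff (hM : M.Infinite) (hα : α ≤ Γ) {t : List ℕ} :
    t ∈ TreeOf (sizeFam S α M) ↔ IsSizeFamNode S α M t := by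
  refine ⟨?_, IsSizeFamNode.mem_treeOf hM hα⟩
  rintro ⟨u, ⟨husort, humem, -, humin⟩, htu⟩
  refine ⟨husort.sublist htu.sublist, fun x hx => humem x (htu.sublist.mem hx), ?_⟩
  rcases eq_or_ne t [] with rfl | ht
  · exact Or.inl rfl
  have hu : u ≠ [] := by rintro rfl; exact ht (List.prefix_nil.1 htu)
  exact Or.inr fun h0 => humin.resolve_left hu (S.evalL_eq_zero_of_prefix h0 htu.dropLast)

theorem nodeHt_sizeFam (hM : M.Infinite) (hα : α ≤ Γ)
    (hwf : WellFounded (childRel (sizeFam S α M))) :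
    ∀ t ∈ TreeOf (sizeFam S α M), nodeHt (sizeFam S α M) hwf t = S.evalL α t := by
  intro t
  induction t using hwf.induction with
  | _ t IH =>
  intro ht
  have htΓ := S.evalL_le t hα
  apply le_antisymm
  · refine nodeHt_le_of_forall_childRel hwf fun c hc => ?_
    obtain ⟨hcT, n, rfl⟩ := hc
    have h0 : S.evalL α t ≠ 0 := by
      simpa using ((mem_treeOf_sizeFam_iff hM hα).1 hcT).2.2
    rw [IH _ ⟨hcT, n, rfl⟩ hcT, S.evalL_concat]
    exact S.fs_lt_self htΓ h0 n
  rcases eq_or_ne (S.evalL α t) 0 with h0 | h0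
  · exact h0 ▸ zero_le
  rw [← S.sup_eq _ htΓ h0]
  refine Ordinal.iSup_le fun n => ?_
  obtain ⟨m, hm, hnm, hlt⟩ := hM.exists_mem_ge_forall_lt t n
  have hc : childRel (sizeFam S α M) (t ++ [m]) t :=
    ⟨(((mem_treeOf_sizeFam_iff hM hα).1 ht).concat h0 hm hlt).mem_treeOf hM hα, m, rfl⟩
  calc S.fs (S.evalL α t) n + 1
      ≤ S.fs (S.evalL α t) m + 1 := add_le_add_left (S.mono _ htΓ hnm) 1
    _ = nodeHt (sizeFam S α M) hwf (t ++ [m]) + 1 := by rw [IH _ hc hc.1, S.evalL_concat]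
    _ ≤ nodeHt (sizeFam S α M) hwf t := Order.add_one_le_of_lt (nodeHt_lt_of_childRel hwf hc)

end SizeFam

theorem sizeFam_nodeHt_general {Γ : Ordinal} (S : FSSystem Γ)
    (M : Set ℕ) (hM : M.Infinite)
    (α : Ordinal) (hα : α ≤ Γ)
    (hwf : WellFounded (childRel (sizeFam S α M))) :
    (∀ t ∈ TreeOf (sizeFam S α M), nodeHt (sizeFam S α M) hwf t = S.evalL α t) ∧
      htB (sizeFam S α M) hwf = α := by
  have hnil : IsSizeFamNode S α M [] := ⟨List.Pairwise.nil, by simp, Or.inl rfl⟩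
  exact ⟨nodeHt_sizeFam hM hα hwf, nodeHt_sizeFam hM hα hwf [] (hnil.mem_treeOf hM hα)⟩

/-- For a nested system and the barrier `B^α` of `α`-size subsets of `M`, the height of each
node `t` of `T(B^α)` equals `α[t]`; in particular `ht(B^α) = α`. -/
theorem sizeFam_nodeHt {Γ : Ordinal} (S : FSSystem Γ) (hN : S.Nested)
    (M : Set ℕ) (hM : M.Infinite) (hM1 : ∀ m ∈ M, 1 < m)
    (α : Ordinal) (hα : α ≤ Γ)
    (hwf : WellFounded (childRel (sizeFam S α M))) :
    (∀ t ∈ TreeOf (sizeFam S α M), nodeHt (sizeFam S α M) hwf t = S.evalL α t) ∧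
      htB (sizeFam S α M) hwf = α :=
  sizeFam_nodeHt_general S M hM α hα hwf
end
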